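/- Let C₁ = {(x,y,0) : (x + 1/2)² + y² = 1}, C₂ = {(x,0,z) : (x − 1/2)² + z² = 1}, and O = convexHull ℝ (C₁ ∪ C₂). For every m ∈ [0,1] and t ∈ [−2π/3, 2π/3], the point P(m,t) = (−1/2 + m/(cos t + 1) + (m−1)cos t, (1−m)sin t, m√(2cos t + 1)/(cos t + 1)) lies in O, and likewise the point with the sign of the third coordinate reversed lies in O. -/

import Mathlib

open Real MeasureTheory

/-- First unit circle: in the plane `z = 0`, centered at `(-1/2, 0, 0)`. -/
def oloidC1 : Set (Fin 3 → ℝ) := {p | (p 0 + 1/2)^2 + (p 1)^2 = 1 ∧ p 2 = 0}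

/-- Second unit circle: in the plane `y = 0`, centered at `(1/2, 0, 0)`. -/
def oloidC2 : Set (Fin 3 → ℝ) := {p | (p 0 - 1/2)^2 + (p 2)^2 = 1 ∧ p 1 = 0}

/-- The oloid: the convex hull of the two circles. -/
def oloid : Set (Fin 3 → ℝ) := convexHull ℝ (oloidC1 ∪ oloidC2)

/-- Complete elliptic integral of the first kind. -/
noncomputable def ellipticK (m : ℝ) : ℝ :=
  ∫ θ in (0:ℝ)..(π/2), 1 / Real.sqrt (1 - m * Real.sin θ ^ 2)

/-- Complete elliptic integral of the second kind. -/
noncomputable def ellipticE (m : ℝ) : ℝ :=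
  ∫ θ in (0:ℝ)..(π/2), Real.sqrt (1 - m * Real.sin θ ^ 2)

/-- Parametrization of the upper sheet of the oloid surface. -/
noncomputable def oloidP (m t : ℝ) : Fin 3 → ℝ :=
  ![-1/2 + m / (Real.cos t + 1) + (m - 1) * Real.cos t,
    (1 - m) * Real.sin t,
    m * Real.sqrt (2 * Real.cos t + 1) / (Real.cos t + 1)]

/-!
`P(m, t)` is the point dividing, in ratio `m : 1 - m`, the segment from
`A = (-1/2 - cos t, sin t, 0) ∈ C₁` to `B = (1/(cos t + 1) - 1/2, 0, ±√(2 cos t + 1)/(cos t + 1)) ∈ C₂`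
(the surface of the oloid is ruled by such segments). Both endpoints lie on the circles as soon as
`cos t ≥ -1/2`, which is exactly the range `|t| ≤ 2π/3`, so `P(m, t)` lies in the convex hull.
-/

lemma mem_oloidC1_of_sq_add_sq {c s : ℝ} (hcs : c ^ 2 + s ^ 2 = 1) :
    ![-1/2 - c, s, 0] ∈ oloidC1 := by
  refine ⟨?_, rfl⟩
  simp only [Matrix.cons_val_zero, Matrix.cons_val_one]
  linear_combination hcs

lemma mem_oloidC2_of_sq_eq {c z : ℝ} (hc : c + 1 ≠ 0) (hz : z ^ 2 = (2 * c + 1) / (c + 1) ^ 2) :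
    ![1 / (c + 1) - 1/2, 0, z] ∈ oloidC2 := by
  refine ⟨?_, rfl⟩
  simp only [Matrix.cons_val_zero, Matrix.cons_val_two, Matrix.tail_cons, Matrix.head_cons]
  rw [hz]
  field_simp
  ring

lemma mem_oloid_of_sq_add_sq {m c s z : ℝ} (hm : m ∈ Set.Icc (0:ℝ) 1) (hcs : c ^ 2 + s ^ 2 = 1)
    (hc : c + 1 ≠ 0) (hz : z ^ 2 = (2 * c + 1) / (c + 1) ^ 2) :
    ![-1/2 + m / (c + 1) + (m - 1) * c, (1 - m) * s, m * z] ∈ oloid := by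
  have hA := subset_convexHull ℝ (oloidC1 ∪ oloidC2) (Or.inl (mem_oloidC1_of_sq_add_sq hcs))
  have hB := subset_convexHull ℝ (oloidC1 ∪ oloidC2) (Or.inr (mem_oloidC2_of_sq_eq hc hz))
  unfold oloid
  convert convex_convexHull ℝ _ hA hB (sub_nonneg.2 hm.2) hm.1 (sub_add_cancel 1 m) using 1
  funext i
  fin_cases i <;> simp
  field_simp
  ring

lemma neg_half_le_cos_of_mem_Icc {t : ℝ} (ht : t ∈ Set.Icc (-(2 * π / 3)) (2 * π / 3)) :
    -(1/2) ≤ cos t := by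
  have hcos : cos (2 * π / 3) = -(1/2) := by
    rw [show 2 * π / 3 = π - π / 3 by ring, cos_pi_sub, cos_pi_div_three]
  rw [← hcos, ← cos_abs t]
  exact cos_le_cos_of_nonneg_of_le_pi (abs_nonneg t) (by linarith [pi_pos])
    (abs_le.mpr ⟨ht.1, ht.2⟩)

theorem oloidP_mem_oloid :
    ∀ m ∈ Set.Icc (0:ℝ) 1, ∀ t ∈ Set.Icc (-(2*π/3)) (2*π/3),
      oloidP m t ∈ oloid ∧
      ![oloidP m t 0, oloidP m t 1, -(oloidP m t 2)] ∈ oloid := by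
  intro m hm t ht
  have hc := neg_half_le_cos_of_mem_Icc ht
  have hc1 : cos t + 1 ≠ 0 := by linarith
  have hz : (√(2 * cos t + 1) / (cos t + 1)) ^ 2 = (2 * cos t + 1) / (cos t + 1) ^ 2 := by
    rw [div_pow, sq_sqrt (by linarith)]
  have hcs := cos_sq_add_sin_sq t
  constructor
  · convert mem_oloid_of_sq_add_sq hm hcs hc1 hz using 1
    funext i; fin_cases i <;> simp [oloidP, mul_div_assoc]
  · convert mem_oloid_of_sq_add_sq hm hcs hc1 ((neg_sq _).trans hz) using 1
    funext i; fin_cases i <;> simp [oloidP, mul_div_assoc]
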